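/- Main theorem: if the enzyme allocation problem (maximize the flux component v̄_{r*} over metabolite concentrations x̄ ∈ X and enzyme concentrations c ≥ 0, subject to Σ_r w_r c_r = c^tot and v̄ = c ∘ κ(x̄,p) ∈ C with v̄_{r*} > 0) has an optimal solution, then it has an optimal solution whose steady-state flux v̄ is an elementary flux mode. -/

import Mathlib

def fluxCone {S R : Type*} [Fintype R] (N : Matrix S R ℝ) (Rirr : Set R) :
    Set (R → ℝ) :=
  {f | N.mulVec f = 0 ∧ ∀ r ∈ Rirr, 0 ≤ f r}

def IsEFM {S R : Type*} [Fintype R] (N : Matrix S R ℝ) (Rirr : Set R)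
    (e : R → ℝ) : Prop :=
  e ∈ fluxCone N Rirr ∧ e ≠ 0 ∧
    ∀ g ∈ fluxCone N Rirr, g ≠ 0 →
      Function.support g ⊆ Function.support e →
      Function.support g = Function.support e

/-- A feasible solution of the enzyme allocation problem. -/
def Feasible {S R : Type*} [Fintype R] (N : Matrix S R ℝ) (Rirr : Set R)
    (κ : (S → ℝ) → R → ℝ) (w : R → ℝ) (ctot : ℝ) (rstar : R)
    (X : Set (S → ℝ)) (x : S → ℝ) (c : R → ℝ) : Prop :=
  x ∈ X ∧ (∀ r, 0 ≤ c r) ∧ (∑ r, w r * c r = ctot) ∧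
    (fun r => c r * κ x r) ∈ fluxCone N Rirr ∧ 0 < c rstar * κ x rstar

/-!
Fix the optimal metabolite state `x` and write `k = κ x`, `M` for the optimal value. Dropping the
budget, the enzyme profiles `d ≥ 0` with `d * k` in the flux cone form a cone on which optimality of
`c` says that the linear functional `d ↦ M * (w ⬝ᵥ d) - ctot * d rstar * k rstar` is nonnegative;
it vanishes at `c`. If the flux `c * k` is not elementary, a flux `g` with strictly smaller support
gives a direction `e = g / k` in which `c` can move both ways, so the functional vanishes on the
whole segment through `c`. At the end of the segment some reaction of the support is switched off;
rescaled to the budget, this is an optimal profile with a smaller flux support. Induction on the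
size of the support ends at an EFM.
-/

open Function Filter Topology Matrix

section FluxCone

variable {S R : Type*} [Fintype R] {N : Matrix S R ℝ} {Rirr : Set R}

theorem smul_mem_fluxCone {f : R → ℝ} (hf : f ∈ fluxCone N Rirr) {a : ℝ} (ha : 0 ≤ a) :
    a • f ∈ fluxCone N Rirr :=
  ⟨by rw [mulVec_smul, hf.1, smul_zero], fun r hr => mul_nonneg ha (hf.2 r hr)⟩

/-- An irreversible reaction with `k r < 0` carries no enzyme in `c`, hence none in `d`. -/
theorem mul_mem_fluxCone_of_support_subset {c d k : R → ℝ} (hc : 0 ≤ c)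
    (hck : c * k ∈ fluxCone N Rirr) (hd : 0 ≤ d) (hdc : support d ⊆ support c)
    (hker : N *ᵥ (d * k) = 0) : d * k ∈ fluxCone N Rirr := by
  refine ⟨hker, fun r hr => ?_⟩
  by_cases hdr : d r = 0
  · simp [hdr]
  · have hcr : 0 < c r := (hc r).lt_of_ne' (hdc hdr)
    exact mul_nonneg (hd r) (nonneg_of_mul_nonneg_right (hck.2 r hr) hcr)

theorem exists_ssubset_support_of_not_isEFM {v : R → ℝ} (hv : v ∈ fluxCone N Rirr)
    (hv0 : v ≠ 0) (h : ¬ IsEFM N Rirr v) :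
    ∃ g ∈ fluxCone N Rirr, g ≠ 0 ∧ support g ⊂ support v := by
  simp only [IsEFM, not_and, not_forall] at h
  obtain ⟨g, hg, hg0, hsub, hne⟩ := h hv hv0
  exact ⟨g, hg, hg0, hsub.ssubset_of_ne hne⟩

end FluxCone

section Line

variable {R : Type*} [Fintype R]

theorem dotProduct_pos_of_pos {w d : R → ℝ} (hw : ∀ r, 0 < w r) (hd : 0 ≤ d) {r : R}
    (hr : 0 < d r) : 0 < w ⬝ᵥ d :=
  Finset.sum_pos' (fun i _ => mul_nonneg (hw i).le (hd i))
    ⟨r, Finset.mem_univ r, mul_pos (hw r) hr⟩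

theorem eq_zero_of_eventually_nonneg_mul {a : ℝ} (h : ∀ᶠ s in 𝓝 (0 : ℝ), 0 ≤ s * a) :
    a = 0 := by
  obtain ⟨s, hsa, hs⟩ := ((h.filter_mono nhdsWithin_le_nhds).and
    (self_mem_nhdsWithin (s := Set.Iio 0))).exists
  obtain ⟨t, hta, ht⟩ := ((h.filter_mono nhdsWithin_le_nhds).and
    (self_mem_nhdsWithin (s := Set.Ioi 0))).exists
  exact le_antisymm (nonpos_of_mul_nonneg_right hsa hs) (nonneg_of_mul_nonneg_right hta ht)

theorem eventually_nonneg_add_smul {c e : R → ℝ} (hc : 0 ≤ c)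
    (hec : ∀ r, e r ≠ 0 → 0 < c r) : ∀ᶠ s in 𝓝 (0 : ℝ), 0 ≤ c + s • e := by
  simp only [Pi.le_def, Pi.zero_apply, Pi.add_apply, Pi.smul_apply, smul_eq_mul,
    eventually_all]
  intro r
  by_cases her : e r = 0
  · simpa [her] using hc r
  · have hlim : Tendsto (fun s : ℝ => c r + s * e r) (𝓝 0) (𝓝 (c r + 0 * e r)) :=
      (continuous_const.add (continuous_id.mul continuous_const)).tendsto 0
    rw [zero_mul, add_zero] at hlim
    exact (hlim.eventually (lt_mem_nhds (hec r her))).mono fun _ => le_of_lt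

theorem exists_add_smul_nonneg_eq_zero {c e : R → ℝ} (hc : 0 ≤ c) (he : e ≠ 0)
    (hec : ∀ r, e r ≠ 0 → 0 < c r) :
    ∃ t : ℝ, 0 ≤ c + t • e ∧ ∃ r, e r ≠ 0 ∧ c r + t * e r = 0 := by
  classical
  wlog hneg : ∃ r, e r < 0 generalizing e
  · push Not at hneg
    obtain ⟨r, hr⟩ := Function.ne_iff.mp he
    obtain ⟨t, hnn, r', hr', hzero⟩ := this (neg_ne_zero.mpr he)
      (fun r h => hec r (neg_ne_zero.mp h)) ⟨r, neg_lt_zero.mpr ((hneg r).lt_of_ne' hr)⟩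
    exact ⟨-t, by simpa using hnn, r', neg_ne_zero.mp hr', by simpa using hzero⟩
  obtain ⟨r₁, hr₁, hmin⟩ := (Finset.univ.filter fun r => e r < 0).exists_min_image
    (fun r => -(c r / e r)) (by simpa [Finset.Nonempty] using hneg)
  have he₁ : e r₁ < 0 := (Finset.mem_filter.mp hr₁).2
  set t := -(c r₁ / e r₁)
  have ht : 0 ≤ t := neg_nonneg.mpr (div_nonpos_of_nonneg_of_nonpos (hc r₁) he₁.le)
  refine ⟨t, fun r => ?_, r₁, he₁.ne, by rw [neg_mul, div_mul_cancel₀ _ he₁.ne, add_neg_cancel]⟩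
  simp only [Pi.zero_apply, Pi.add_apply, Pi.smul_apply, smul_eq_mul]
  by_cases her : e r < 0
  · have hle := mul_le_mul_of_nonpos_right
      (hmin r (Finset.mem_filter.mpr ⟨Finset.mem_univ _, her⟩)) her.le
    rw [neg_mul, div_mul_cancel₀ _ her.ne] at hle
    linarith
  · exact add_nonneg (hc r) (mul_nonneg ht (not_lt.mp her))

end Line

section Allocation

variable {S R : Type*} [Fintype R] {N : Matrix S R ℝ} {Rirr : Set R}
  {κ : (S → ℝ) → R → ℝ} {w : R → ℝ} {ctot : ℝ} {rstar : R} {X : Set (S → ℝ)}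
  {x : S → ℝ} {c d : R → ℝ}

variable (N Rirr κ w ctot rstar X) in
def IsOptimal (x : S → ℝ) (c : R → ℝ) : Prop :=
  Feasible N Rirr κ w ctot rstar X x c ∧
    ∀ x' c', Feasible N Rirr κ w ctot rstar X x' c' →
      c' rstar * κ x' rstar ≤ c rstar * κ x rstar

theorem Feasible.ctot_pos (hw : ∀ r, 0 < w r) (h : Feasible N Rirr κ w ctot rstar X x c) :
    0 < ctot := by
  obtain ⟨-, hc, hbudget, -, hflux⟩ := h
  rw [← hbudget]
  exact dotProduct_pos_of_pos hw hc ((hc rstar).lt_of_ne' (left_ne_zero_of_mul hflux.ne'))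

theorem feasible_smul_of_mem_fluxCone (hw : ∀ r, 0 < w r) (hctot : 0 < ctot) (hx : x ∈ X)
    (hd : 0 ≤ d) (hdk : d * κ x ∈ fluxCone N Rirr) (hflux : 0 < d rstar * κ x rstar) :
    Feasible N Rirr κ w ctot rstar X x ((ctot / (w ⬝ᵥ d)) • d) := by
  have hW : 0 < w ⬝ᵥ d :=
    dotProduct_pos_of_pos hw hd ((hd rstar).lt_of_ne' (left_ne_zero_of_mul hflux.ne'))
  have ha : 0 < ctot / (w ⬝ᵥ d) := div_pos hctot hW
  refine ⟨hx, fun r => mul_nonneg ha.le (hd r), ?_, ?_, ?_⟩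
  · change w ⬝ᵥ ((ctot / (w ⬝ᵥ d)) • d) = ctot
    rw [dotProduct_smul, smul_eq_mul, div_mul_cancel₀ _ hW.ne']
  · change ((ctot / (w ⬝ᵥ d)) • d) * κ x ∈ fluxCone N Rirr
    rw [smul_mul_assoc]
    exact smul_mem_fluxCone hdk ha.le
  · change 0 < ctot / (w ⬝ᵥ d) * d rstar * κ x rstar
    rw [mul_assoc]
    exact mul_pos ha hflux

/-- Rescale `d` to the budget and compare with `c`. -/
theorem IsOptimal.mul_le_mul_dotProduct (hw : ∀ r, 0 < w r)
    (h : IsOptimal N Rirr κ w ctot rstar X x c) (hd : 0 ≤ d)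
    (hdk : d * κ x ∈ fluxCone N Rirr) :
    ctot * (d rstar * κ x rstar) ≤ c rstar * κ x rstar * (w ⬝ᵥ d) := by
  have hctot := h.1.ctot_pos hw
  by_cases hflux : 0 < d rstar * κ x rstar
  · have hW : 0 < w ⬝ᵥ d :=
      dotProduct_pos_of_pos hw hd ((hd rstar).lt_of_ne' (left_ne_zero_of_mul hflux.ne'))
    have hle := h.2 x _ (feasible_smul_of_mem_fluxCone hw hctot h.1.1 hd hdk hflux)
    change ctot / (w ⬝ᵥ d) * d rstar * κ x rstar ≤ c rstar * κ x rstar at hle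
    rwa [mul_assoc, div_mul_eq_mul_div, div_le_iff₀ hW] at hle
  · calc ctot * (d rstar * κ x rstar) ≤ 0 :=
          mul_nonpos_of_nonneg_of_nonpos hctot.le (not_lt.mp hflux)
      _ ≤ c rstar * κ x rstar * (w ⬝ᵥ d) :=
          mul_nonneg h.1.2.2.2.2.le (dotProduct_nonneg_of_nonneg (fun r => (hw r).le) hd)

theorem IsOptimal.isOptimal_smul (hw : ∀ r, 0 < w r)
    (h : IsOptimal N Rirr κ w ctot rstar X x c) (hd : 0 ≤ d)
    (hdk : d * κ x ∈ fluxCone N Rirr) (hW : 0 < w ⬝ᵥ d)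
    (heq : ctot * (d rstar * κ x rstar) = c rstar * κ x rstar * (w ⬝ᵥ d)) :
    IsOptimal N Rirr κ w ctot rstar X x ((ctot / (w ⬝ᵥ d)) • d) := by
  have hctot := h.1.ctot_pos hw
  have hflux : 0 < d rstar * κ x rstar :=
    pos_of_mul_pos_right (heq ▸ mul_pos h.1.2.2.2.2 hW) hctot.le
  have hval : ((ctot / (w ⬝ᵥ d)) • d) rstar * κ x rstar = c rstar * κ x rstar := by
    change ctot / (w ⬝ᵥ d) * d rstar * κ x rstar = c rstar * κ x rstar
    rw [mul_assoc, div_mul_eq_mul_div, heq, mul_div_cancel_right₀ _ hW.ne']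
  exact ⟨feasible_smul_of_mem_fluxCone hw hctot h.1.1 hd hdk hflux,
    fun x' c' h' => (h.2 x' c' h').trans_eq hval.symm⟩

/-- The gap in `IsOptimal.mul_le_mul_dotProduct` is linear along the line `c + s • e`, nonnegative
near `s = 0` and zero at `s = 0`, so it vanishes on the whole segment where `c + s • e ≥ 0`. -/
theorem IsOptimal.isOptimal_add_smul (hw : ∀ r, 0 < w r)
    (h : IsOptimal N Rirr κ w ctot rstar X x c) {e : R → ℝ}
    (hec : ∀ r, e r ≠ 0 → 0 < c r) (hker : N *ᵥ (e * κ x) = 0) {t : ℝ}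
    (ht : 0 ≤ c + t • e) (hW : 0 < w ⬝ᵥ (c + t • e)) :
    IsOptimal N Rirr κ w ctot rstar X x ((ctot / (w ⬝ᵥ (c + t • e))) • (c + t • e)) := by
  obtain ⟨-, hc, hbudget, -, -⟩ := h.1
  have hck : c * κ x ∈ fluxCone N Rirr := h.1.2.2.2.1
  have hmem : ∀ s : ℝ, 0 ≤ c + s • e → (c + s • e) * κ x ∈ fluxCone N Rirr := by
    intro s hs
    refine mul_mem_fluxCone_of_support_subset hc hck hs (fun r hr => ?_) ?_
    · by_contra hcr
      have her : e r = 0 := by_contra fun her => hcr (hec r her).ne'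
      exact hr (by simp [notMem_support.mp hcr, her])
    · rw [add_mul, smul_mul_assoc, mulVec_add, mulVec_smul, hker, hck.1, smul_zero, add_zero]
  set a := c rstar * κ x rstar * (w ⬝ᵥ e) - ctot * (e rstar * κ x rstar)
  have hgap : ∀ s : ℝ, c rstar * κ x rstar * (w ⬝ᵥ (c + s • e)) -
      ctot * ((c + s • e) rstar * κ x rstar) = s * a := by
    intro s
    rw [dotProduct_add, dotProduct_smul, smul_eq_mul, show w ⬝ᵥ c = ctot from hbudget]
    simp only [Pi.add_apply, Pi.smul_apply, smul_eq_mul, a]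
    ring
  have ha : a = 0 := eq_zero_of_eventually_nonneg_mul <|
    (eventually_nonneg_add_smul hc hec).mono fun s hs => by
      rw [← hgap]
      exact sub_nonneg.mpr (h.mul_le_mul_dotProduct hw hs (hmem s hs))
  have hgap_t := hgap t
  rw [ha, mul_zero, sub_eq_zero] at hgap_t
  exact h.isOptimal_smul hw ht (hmem t ht) hW hgap_t.symm

theorem IsOptimal.exists_isOptimal_support_ssubset (hw : ∀ r, 0 < w r)
    (h : IsOptimal N Rirr κ w ctot rstar X x c) {g : R → ℝ} (hg : N *ᵥ g = 0) (hg0 : g ≠ 0)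
    (hsub : support g ⊂ support (c * κ x)) :
    ∃ c', IsOptimal N Rirr κ w ctot rstar X x c' ∧ support (c' * κ x) ⊂ support (c * κ x) := by
  have hc : 0 ≤ c := h.1.2.1
  set e := g / κ x
  have hge : ∀ r, e r ≠ 0 → g r ≠ 0 := fun r her hgr => her (by simp [e, hgr])
  have hek : e * κ x = g := funext fun r =>
    div_mul_cancel_of_imp fun hk => by_contra fun hgr => hsub.subset hgr (by simp [hk])
  have hec : ∀ r, e r ≠ 0 → 0 < c r := fun r her =>
    (hc r).lt_of_ne' (left_ne_zero_of_mul (hsub.subset (hge r her)))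
  have he0 : e ≠ 0 := fun he => hg0 (by rw [← hek, he, zero_mul])
  obtain ⟨t, ht, r₁, he₁, hzero⟩ := exists_add_smul_nonneg_eq_zero hc he0 hec
  obtain ⟨r₀, hv₀, hg₀⟩ := Set.exists_of_ssubset hsub
  have he₀ : e r₀ = 0 := by simp [e, notMem_support.mp hg₀]
  have hW : 0 < w ⬝ᵥ (c + t • e) := dotProduct_pos_of_pos hw ht (r := r₀) (by
    simpa [he₀] using (hc r₀).lt_of_ne' (left_ne_zero_of_mul hv₀))
  refine ⟨_, h.isOptimal_add_smul hw hec (by rw [hek, hg]) ht hW, ?_⟩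
  have hflux : (c + t • e) * κ x = c * κ x + t • g := by rw [add_mul, smul_mul_assoc, hek]
  rw [smul_mul_assoc, support_const_smul_of_ne_zero _ _ (div_pos (h.1.ctot_pos hw) hW).ne',
    hflux]
  refine ⟨(support_add _ _).trans (Set.union_subset le_rfl
    ((support_const_smul_subset t g).trans hsub.subset)), fun hsup => ?_⟩
  have hr₁ := hsup (hsub.subset (hge r₁ he₁))
  rw [← hflux] at hr₁
  exact hr₁ (by simp [hzero])

theorem IsOptimal.exists_isOptimal_isEFM (hw : ∀ r, 0 < w r)
    (h : IsOptimal N Rirr κ w ctot rstar X x c) :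
    ∃ c', IsOptimal N Rirr κ w ctot rstar X x c' ∧ IsEFM N Rirr (c' * κ x) := by
  induction hn : (support (c * κ x)).ncard using Nat.strong_induction_on generalizing c with
  | _ n ih =>
    by_cases hefm : IsEFM N Rirr (c * κ x)
    · exact ⟨c, h, hefm⟩
    have hv0 : c * κ x ≠ 0 := fun hv => h.1.2.2.2.2.ne' (congrFun hv rstar)
    obtain ⟨g, hg, hg0, hsub⟩ := exists_ssubset_support_of_not_isEFM h.1.2.2.2.1 hv0 hefm
    obtain ⟨c', h', hlt⟩ := h.exists_isOptimal_support_ssubset hw hg.1 hg0 hsub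
    exact ih _ (hn ▸ Set.ncard_lt_ncard hlt) h' rfl

end Allocation

theorem optimal_solution_is_efm_general {S R : Type*} [Fintype R]
    (N : Matrix S R ℝ) (Rirr : Set R) (κ : (S → ℝ) → R → ℝ)
    (w : R → ℝ) (hw : ∀ r, 0 < w r) (ctot : ℝ)
    (rstar : R) (X : Set (S → ℝ))
    (hopt : ∃ x c, Feasible N Rirr κ w ctot rstar X x c ∧
      ∀ x' c', Feasible N Rirr κ w ctot rstar X x' c' →
        c' rstar * κ x' rstar ≤ c rstar * κ x rstar) :
    ∃ x c, Feasible N Rirr κ w ctot rstar X x c ∧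
      (∀ x' c', Feasible N Rirr κ w ctot rstar X x' c' →
        c' rstar * κ x' rstar ≤ c rstar * κ x rstar) ∧
      IsEFM N Rirr (fun r => c r * κ x r) := by
  obtain ⟨x, c, h⟩ := hopt
  obtain ⟨c', ⟨hfeas, hmax⟩, hefm⟩ := IsOptimal.exists_isOptimal_isEFM hw h
  exact ⟨x, c', hfeas, hmax, hefm⟩

/-- main theorem: if the enzyme allocation problem has an optimal
solution, then it has an optimal solution whose steady-state flux is an EFM. -/
theorem optimal_solution_is_efm {S R : Type*} [Fintype S] [Fintype R]
    (N : Matrix S R ℝ) (Rirr : Set R) (κ : (S → ℝ) → R → ℝ)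
    (w : R → ℝ) (hw : ∀ r, 0 < w r) (ctot : ℝ) (hctot : 0 < ctot)
    (rstar : R) (X : Set (S → ℝ))
    (hopt : ∃ x c, Feasible N Rirr κ w ctot rstar X x c ∧
      ∀ x' c', Feasible N Rirr κ w ctot rstar X x' c' →
        c' rstar * κ x' rstar ≤ c rstar * κ x rstar) :
    ∃ x c, Feasible N Rirr κ w ctot rstar X x c ∧
      (∀ x' c', Feasible N Rirr κ w ctot rstar X x' c' →
        c' rstar * κ x' rstar ≤ c rstar * κ x rstar) ∧
      IsEFM N Rirr (fun r => c r * κ x r) :=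
  optimal_solution_is_efm_general N Rirr κ w hw ctot rstar X hopt
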